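/- Let (M, φ, ξ, η, g) be a (2n+1)-dimensional (κ, μ)-contact pseudo-metric manifold with εκ < 1. If (g, Df, λ, 0) is a gradient Ricci soliton on M (Hess f + Ric + λg = 0), then R(X, Y)ξ = 0 for all vector fields X, Y. -/
import Mathlib


open scoped BigOperators

/-- Abstract model of a `(2n+1)`-dimensional contact pseudo-metric manifold
`(M, φ, ξ, η, g)`.  Here `C` plays the role of the commutative ring of smooth
functions on `M` and `V` that of the `C`-module of smooth vector fields;
`d X f` is the derivative of the function `f` along the vector field `X`,
`bracket` is the Lie bracket, `nabla` is the Levi-Civita connection of the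
pseudo-Riemannian metric `g` (characterized by metric compatibility and
torsion-freeness), and `e` is a global pseudo-orthonormal frame with signs
`sgn` which is used to compute traces.  `ε = g(ξ,ξ) = ±1`, `η(ξ) = 1`,
`φ² = -Id + η ⊗ ξ`, `g(φX,φY) = g(X,Y) - ε η(X) η(Y)`, `η(X) = ε g(ξ,X)`,
and the contact condition `g(X, φY) = dη(X,Y)` holds; moreover
`∇_X ξ = -ε φX - φ h X` with `h = ½ £_ξ φ`. -/
structure ContactSetup (C : Type) [CommRing C] [Algebra ℝ C]
    (V : Type) [AddCommGroup V] [Module ℝ V] [Module C V] [IsScalarTower ℝ C V]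
    (n : ℕ) : Type where
  g : V →ₗ[C] V →ₗ[C] C
  g_symm : ∀ X Y, g X Y = g Y X
  g_nondeg : ∀ X, (∀ Y, g X Y = 0) → X = 0
  bracket : V → V → V
  d : V → C → C
  d_addX : ∀ (f : C) (X Y : V), d (X + Y) f = d X f + d Y f
  d_smulX : ∀ (c f : C) (X : V), d (c • X) f = c * d X f
  d_add : ∀ (X : V) (f₁ f₂ : C), d X (f₁ + f₂) = d X f₁ + d X f₂
  d_mul : ∀ (X : V) (f₁ f₂ : C), d X (f₁ * f₂) = d X f₁ * f₂ + f₁ * d X f₂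
  d_const : ∀ (X : V) (c : ℝ), d X (algebraMap ℝ C c) = 0
  bracket_apply : ∀ (X Y : V) (f : C), d (bracket X Y) f = d X (d Y f) - d Y (d X f)
  nabla : V → V → V
  nabla_addX : ∀ X Y Z, nabla (X + Y) Z = nabla X Z + nabla Y Z
  nabla_smulX : ∀ (f : C) (X Y : V), nabla (f • X) Y = f • nabla X Y
  nabla_addY : ∀ X Y Z, nabla X (Y + Z) = nabla X Y + nabla X Z
  nabla_leibniz : ∀ (f : C) (X Y : V), nabla X (f • Y) = d X f • Y + f • nabla X Y
  nabla_metric : ∀ X Y Z, d X (g Y Z) = g (nabla X Y) Z + g Y (nabla X Z)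
  nabla_torsion_free : ∀ X Y, nabla X Y - nabla Y X = bracket X Y
  e : Fin (2 * n + 1) → V
  sgn : Fin (2 * n + 1) → ℝ
  sgn_sq : ∀ i, sgn i * sgn i = 1
  e_orthonormal : ∀ i j, g (e i) (e j) = if i = j then algebraMap ℝ C (sgn i) else 0
  e_complete : ∀ X : V, X = ∑ i, (sgn i • g X (e i)) • e i
  φ : V →ₗ[C] V
  ξ : V
  η : V →ₗ[C] C
  ε : ℝ
  ε_pm : ε = 1 ∨ ε = -1
  η_ξ : η ξ = 1
  φ_sq : ∀ X, φ (φ X) = -X + η X • ξ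
  g_compat : ∀ X Y, g (φ X) (φ Y) = g X Y - ε • (η X * η Y)
  η_g : ∀ X, η X = ε • g ξ X
  contact : ∀ X Y, g X (φ Y)
      = (1/2 : ℝ) • (d X (η Y) - d Y (η X) - η (bracket X Y))
  nabla_xi : ∀ X, nabla X ξ
      = -(ε • φ X) - (1/2 : ℝ) • (φ (bracket ξ (φ X)) - φ (φ (bracket ξ X)))

noncomputable section

namespace ContactSetup

variable {C : Type} [CommRing C] [Algebra ℝ C]
  {V : Type} [AddCommGroup V] [Module ℝ V] [Module C V] [IsScalarTower ℝ C V]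
  {n : ℕ} (S : ContactSetup C V n)

/-- Curvature tensor `R(X,Y)Z = ∇_X ∇_Y Z - ∇_Y ∇_X Z - ∇_[X,Y] Z`. -/
def R (X Y Z : V) : V :=
  S.nabla X (S.nabla Y Z) - S.nabla Y (S.nabla X Z) - S.nabla (S.bracket X Y) Z

/-- Ricci tensor, `Ric(X,Y) = tr (Z ↦ R(Z,X)Y)`. -/
def Ric (X Y : V) : C := ∑ i, S.sgn i • S.g (S.R (S.e i) X Y) (S.e i)

/-- Ricci operator `Q`, satisfying `g(QX,Y) = Ric(X,Y)`. -/
def Q (X : V) : V := ∑ i, (S.sgn i • S.Ric X (S.e i)) • S.e i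

/-- scalar curvature `r = tr Q`. -/
def scal : C := ∑ i, S.sgn i • S.Ric (S.e i) (S.e i)

/-- Lie derivative of the metric, `(£_W g)(X,Y)`. -/
def lieG (W X Y : V) : C :=
  S.d W (S.g X Y) - S.g (S.bracket W X) Y - S.g X (S.bracket W Y)

/-- covariant derivative of the Ricci operator, `(∇_X Q) Y`. -/
def nablaQ (X Y : V) : V := S.nabla X (S.Q Y) - S.Q (S.nabla X Y)

/-- Lie derivative of the connection, `(£_W ∇)(X,Y)`. -/
def lieNabla (W X Y : V) : V :=
  S.bracket W (S.nabla X Y) - S.nabla (S.bracket W X) Y - S.nabla X (S.bracket W Y)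

/-- Lie derivative of the curvature tensor, `(£_W R)(X,Y)Z`. -/
def lieR (W X Y Z : V) : V :=
  S.bracket W (S.R X Y Z) - S.R (S.bracket W X) Y Z - S.R X (S.bracket W Y) Z
    - S.R X Y (S.bracket W Z)

/-- the tensor `h = ½ £_ξ φ`. -/
def hTen (X : V) : V := (1/2 : ℝ) • (S.bracket S.ξ (S.φ X) - S.φ (S.bracket S.ξ X))

/-- covariant derivative of `φ`, `(∇_X φ) Y`. -/
def nablaPhi (X Y : V) : V := S.nabla X (S.φ Y) - S.φ (S.nabla X Y)

/-- Lie derivative of `φ`, `(£_W φ) X`. -/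
def liePhi (W X : V) : V := S.bracket W (S.φ X) - S.φ (S.bracket W X)

/-- K-contact: `ξ` is Killing; hence `Qξ = 2nεξ` and `∇_X ξ = -ε φ X`. -/
def IsKContact : Prop :=
  (∀ X Y, S.lieG S.ξ X Y = 0) ∧ S.Q S.ξ = ((2 * n : ℝ) * S.ε) • S.ξ ∧
    ∀ X, S.nabla X S.ξ = -(S.ε • S.φ X)

/-- Sasakian: K-contact with `(∇_X φ)Y = g(X,Y)ξ - ε η(Y) X` and
`R(X,Y)ξ = η(Y)X - η(X)Y`. -/
def IsSasakian : Prop :=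
  S.IsKContact ∧ (∀ X Y, S.nablaPhi X Y = S.g X Y • S.ξ - (S.ε • S.η Y) • X) ∧
    ∀ X Y, S.R X Y S.ξ = S.η Y • X - S.η X • Y

/-- η-Ricci soliton: `£_W g + 2 Ric + 2 λ g + 2 μ η ⊗ η = 0`. -/
def IsEtaRicciSoliton (W : V) (lam mu : ℝ) : Prop :=
  ∀ X Y, S.lieG W X Y + 2 * S.Ric X Y + (2 * lam) • S.g X Y
      + (2 * mu) • (S.η X * S.η Y) = 0

end ContactSetup

end

noncomputable section

namespace ContactSetup

variable {C : Type} [CommRing C] [Algebra ℝ C]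
  {V : Type} [AddCommGroup V] [Module ℝ V] [Module C V] [IsScalarTower ℝ C V]
  {n : ℕ} (S : ContactSetup C V n)

/-! ### scalar helpers -/

lemma half_cancel {M : Type} [AddCommGroup M] [Module ℝ M] {x : M}
    (h : x + x = 0) : x = 0 := by
  have h2 : (2:ℝ) • x = 0 := by rw [two_smul]; exact h
  have := congrArg (fun y : M => (1/2 : ℝ) • y) h2
  simpa [smul_smul] using this

lemma eps_sq : S.ε * S.ε = 1 := by
  rcases S.ε_pm with h | h <;> rw [h] <;> norm_num

lemma eps_ne : S.ε ≠ 0 := by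
  rcases S.ε_pm with h | h <;> rw [h] <;> norm_num

/-! ### d basics -/

lemma d_zero (X : V) : S.d X 0 = 0 := by
  simpa using S.d_const X 0

lemma d_one (X : V) : S.d X 1 = 0 := by
  simpa using S.d_const X 1

lemma d_rsmul (X : V) (r : ℝ) (f : C) : S.d X (r • f) = r • S.d X f := by
  rw [Algebra.smul_def, S.d_mul, S.d_const, Algebra.smul_def]
  ring

lemma d_sub (X : V) (f₁ f₂ : C) : S.d X (f₁ - f₂) = S.d X f₁ - S.d X f₂ := by
  have h := S.d_add X (f₁ - f₂) f₂
  rw [sub_add_cancel] at h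
  linear_combination -h

/-! ### nabla basics -/

lemma nabla_zeroY (X : V) : S.nabla X 0 = 0 := by
  have h := S.nabla_addY X 0 0
  rw [add_zero] at h
  exact (left_eq_add.mp h)

lemma nabla_zeroX (Y : V) : S.nabla 0 Y = 0 := by
  have h := S.nabla_smulX 0 Y Y
  simpa using h

lemma nabla_rsmulY (X : V) (r : ℝ) (Y : V) :
    S.nabla X (r • Y) = r • S.nabla X Y := by
  rw [← algebraMap_smul C r Y, S.nabla_leibniz, S.d_const,
    ← algebraMap_smul C r (S.nabla X Y), zero_smul, zero_add]

lemma nabla_negY (X Y : V) : S.nabla X (-Y) = - S.nabla X Y := by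
  have h := S.nabla_addY X Y (-Y)
  rw [add_neg_cancel, nabla_zeroY] at h
  exact eq_neg_of_add_eq_zero_right h.symm

lemma nabla_subY (X Y Z : V) :
    S.nabla X (Y - Z) = S.nabla X Y - S.nabla X Z := by
  rw [sub_eq_add_neg, S.nabla_addY, nabla_negY, sub_eq_add_neg]

/-! ### bracket basics -/

lemma bracket_eq (X Y : V) : S.bracket X Y = S.nabla X Y - S.nabla Y X :=
  (S.nabla_torsion_free X Y).symm

lemma bracket_self (X : V) : S.bracket X X = 0 := by
  rw [bracket_eq, sub_self]

lemma bracket_antisymm (X Y : V) : S.bracket Y X = - S.bracket X Y := by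
  rw [bracket_eq, bracket_eq]; abel

lemma bracket_zero_right (X : V) : S.bracket X 0 = 0 := by
  rw [bracket_eq, nabla_zeroY, nabla_zeroX, sub_self]

lemma bracket_add_right (X Y Z : V) :
    S.bracket X (Y + Z) = S.bracket X Y + S.bracket X Z := by
  rw [bracket_eq, bracket_eq, bracket_eq, S.nabla_addY, S.nabla_addX]
  abel

lemma bracket_neg_right (X Y : V) : S.bracket X (-Y) = - S.bracket X Y := by
  have h := bracket_add_right S X Y (-Y)
  rw [add_neg_cancel, bracket_zero_right] at h
  exact eq_neg_of_add_eq_zero_right h.symm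

lemma bracket_smul_right (X : V) (c : C) (Y : V) :
    S.bracket X (c • Y) = S.d X c • Y + c • S.bracket X Y := by
  rw [bracket_eq, S.nabla_leibniz, S.nabla_smulX, bracket_eq, smul_sub]
  abel

/-! ### g basics -/

lemma g_xi (X : V) : S.g S.ξ X = S.ε • S.η X := by
  rw [S.η_g X, smul_smul, eps_sq, one_smul]

lemma g_xi' (X : V) : S.g X S.ξ = S.ε • S.η X := by
  rw [S.g_symm]; exact g_xi S X

lemma g_xi_xi : S.g S.ξ S.ξ = algebraMap ℝ C S.ε := by
  rw [g_xi, S.η_ξ, Algebra.algebraMap_eq_smul_one]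

end ContactSetup

end
noncomputable section
namespace ContactSetup

variable {C : Type} [CommRing C] [Algebra ℝ C]
  {V : Type} [AddCommGroup V] [Module ℝ V] [Module C V] [IsScalarTower ℝ C V]
  {n : ℕ} (S : ContactSetup C V n)

/-! ### φ antisymmetry and φ ξ = 0 -/

lemma phi_anti (X Y : V) : S.g X (S.φ Y) = - S.g Y (S.φ X) := by
  rw [S.contact, S.contact, bracket_antisymm S Y X, map_neg]
  module

lemma dagger (X Y : V) :
    S.η Y * S.g (S.φ X) S.ξ = -(S.ε • (S.η X * S.η (S.φ Y))) := by
  have h := S.g_compat X (S.φ Y)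
  rw [S.φ_sq Y] at h
  rw [map_add, map_neg, map_smul, smul_eq_mul] at h
  have h2 : S.g X (S.φ Y) = - S.g (S.φ X) Y := by
    rw [phi_anti, S.g_symm]
  rw [h2] at h
  linear_combination h

lemma eta_phi_xi : S.η (S.φ S.ξ) = 0 := by
  have h := dagger S S.ξ S.ξ
  rw [S.η_ξ, one_mul, one_mul] at h
  have h2 : S.g (S.φ S.ξ) S.ξ = S.ε • S.η (S.φ S.ξ) := g_xi' S _
  rw [h2] at h
  have h3 : S.ε • S.η (S.φ S.ξ) = 0 := by
    apply half_cancel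
    linear_combination h
  have := congrArg (fun y : C => S.ε • y) h3
  simpa [smul_smul, eps_sq] using this

lemma g_phi_xi (X : V) : S.g (S.φ X) S.ξ = 0 := by
  have h := dagger S X S.ξ
  rw [S.η_ξ, one_mul, eta_phi_xi, mul_zero, smul_zero, neg_zero] at h
  exact h

lemma g_xi_phi (X : V) : S.g S.ξ (S.φ X) = 0 := by
  rw [S.g_symm]; exact g_phi_xi S X

lemma eta_phi (X : V) : S.η (S.φ X) = 0 := by
  rw [S.η_g, g_xi_phi, smul_zero]

lemma phi_xi : S.φ S.ξ = 0 := by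
  apply S.g_nondeg
  intro Y
  rw [S.g_symm, phi_anti, g_xi_phi, neg_zero]

lemma lie_eta (X : V) : S.d S.ξ (S.η X) = S.η (S.bracket S.ξ X) := by
  have h := S.contact S.ξ X
  rw [g_xi_phi, S.η_ξ, ← map_one (algebraMap ℝ C), S.d_const] at h
  have h2 : S.d S.ξ (S.η X) - 0 - S.η (S.bracket S.ξ X) = 0 := by
    apply half_cancel
    rw [← two_smul ℝ]
    have := congrArg (fun y : C => (2:ℝ) • y) h.symm
    simpa [smul_smul] using this
  rw [sub_zero, sub_eq_zero] at h2
  exact h2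

end ContactSetup
end
noncomputable section
namespace ContactSetup

variable {C : Type} [CommRing C] [Algebra ℝ C]
  {V : Type} [AddCommGroup V] [Module ℝ V] [Module C V] [IsScalarTower ℝ C V]
  {n : ℕ} (S : ContactSetup C V n)

/-! ### hTen basics -/

lemma h_xi : S.hTen S.ξ = 0 := by
  unfold hTen
  rw [phi_xi, bracket_zero_right, bracket_self, map_zero, sub_zero, smul_zero]

lemma h_zero : S.hTen 0 = 0 := by
  unfold hTen
  rw [map_zero, bracket_zero_right, map_zero, sub_zero, smul_zero]

lemma h_add (X Y : V) : S.hTen (X + Y) = S.hTen X + S.hTen Y := by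
  unfold hTen
  rw [map_add, bracket_add_right, bracket_add_right, map_add]
  module

lemma h_smul (c : C) (X : V) : S.hTen (c • X) = c • S.hTen X := by
  unfold hTen
  simp only [map_smul, map_add, bracket_smul_right]
  module

lemma h_rsmul (r : ℝ) (X : V) : S.hTen (r • X) = r • S.hTen X := by
  rw [← algebraMap_smul C r X, h_smul, algebraMap_smul]

lemma h_neg (X : V) : S.hTen (-X) = - S.hTen X := by
  have h := h_add S X (-X)
  rw [add_neg_cancel, h_zero] at h
  exact eq_neg_of_add_eq_zero_right h.symm

lemma h_sub (X Y : V) : S.hTen (X - Y) = S.hTen X - S.hTen Y := by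
  rw [sub_eq_add_neg, h_add, h_neg, sub_eq_add_neg]

/-! ### nabla ξ -/

lemma nabla_xi' (X : V) :
    S.nabla X S.ξ = -(S.ε • S.φ X) - S.φ (S.hTen X) := by
  rw [S.nabla_xi]
  congr 1
  unfold hTen
  rw [LinearMap.map_smul_of_tower, map_sub]

lemma nabla_xi_xi : S.nabla S.ξ S.ξ = 0 := by
  rw [nabla_xi', phi_xi, h_xi, map_zero, smul_zero, neg_zero, sub_zero]

lemma g_xi_h (X : V) : S.g S.ξ (S.hTen X) = 0 := by
  unfold hTen
  rw [LinearMap.map_smul_of_tower, map_sub]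
  have h1 : S.g S.ξ (S.bracket S.ξ (S.φ X)) = 0 := by
    rw [bracket_eq, map_sub]
    have ha : S.g S.ξ (S.nabla S.ξ (S.φ X)) = 0 := by
      have hm := S.nabla_metric S.ξ S.ξ (S.φ X)
      rw [g_xi_phi, d_zero, nabla_xi_xi, map_zero, LinearMap.zero_apply,
        zero_add] at hm
      exact hm.symm
    have hb : S.g S.ξ (S.nabla (S.φ X) S.ξ) = 0 := by
      rw [nabla_xi' S (S.φ X), map_sub, map_neg, LinearMap.map_smul_of_tower,
        g_xi_phi, g_xi_phi, smul_zero, neg_zero, zero_sub, neg_zero]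
    rw [ha, hb, sub_zero]
  rw [h1, g_xi_phi, sub_zero, smul_zero]

lemma eta_h (X : V) : S.η (S.hTen X) = 0 := by
  rw [S.η_g, g_xi_h, smul_zero]

lemma g_h_xi (X : V) : S.g (S.hTen X) S.ξ = 0 := by
  rw [S.g_symm]; exact g_xi_h S X

/-! ### anticommutation -/

lemma h_phi_anticomm (X : V) : S.hTen (S.φ X) = - S.φ (S.hTen X) := by
  have key : S.hTen (S.φ X) + S.φ (S.hTen X)
      = (1/2:ℝ) • (S.bracket S.ξ (S.φ (S.φ X)) - S.φ (S.φ (S.bracket S.ξ X))) := by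
    unfold hTen
    rw [LinearMap.map_smul_of_tower, map_sub]
    module
  rw [S.φ_sq X, S.φ_sq (S.bracket S.ξ X)] at key
  rw [bracket_add_right, bracket_neg_right, bracket_smul_right, bracket_self,
    smul_zero, add_zero, lie_eta] at key
  have key2 : S.hTen (S.φ X) + S.φ (S.hTen X) = 0 := by
    rw [key, sub_self, smul_zero]
  exact eq_neg_of_add_eq_zero_left key2

lemma phi3 (X : V) : S.φ (S.φ (S.φ X)) = - S.φ X := by
  rw [S.φ_sq, eta_phi, zero_smul, add_zero]

lemma phi_sq_h (X : V) : S.φ (S.φ (S.hTen X)) = - S.hTen X := by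
  rw [S.φ_sq, eta_h, zero_smul, add_zero]

lemma phi_h_phi (X : V) : S.φ (S.hTen (S.φ X)) = S.hTen X := by
  rw [h_phi_anticomm, map_neg, phi_sq_h, neg_neg]

/-! ### derivatives of η -/

lemma eta_nabla_xi (X : V) : S.η (S.nabla X S.ξ) = 0 := by
  rw [nabla_xi', map_sub, map_neg, LinearMap.map_smul_of_tower, eta_phi,
    eta_phi, smul_zero, neg_zero, zero_sub, neg_zero]

lemma g_nabla_xi_xi (X : V) : S.g (S.nabla X S.ξ) S.ξ = 0 := by
  rw [g_xi', eta_nabla_xi, smul_zero]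

lemma d_eta (X Y : V) :
    S.d X (S.η Y) = S.η (S.nabla X Y) + S.ε • S.g (S.nabla X S.ξ) Y := by
  rw [S.η_g Y, d_rsmul, S.nabla_metric, smul_add, S.η_g (S.nabla X Y), add_comm]

lemma d_eta_xi (Y : V) : S.d S.ξ (S.η Y) = S.η (S.nabla S.ξ Y) := by
  rw [d_eta, nabla_xi_xi, map_zero, LinearMap.zero_apply, smul_zero, add_zero]

end ContactSetup
end
noncomputable section
namespace ContactSetup

variable {C : Type} [CommRing C] [Algebra ℝ C]
  {V : Type} [AddCommGroup V] [Module ℝ V] [Module C V] [IsScalarTower ℝ C V]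
  {n : ℕ} (S : ContactSetup C V n)

/-! ### curvature -/

lemma R_skew (X Y Z W : V) : S.g (S.R X Y Z) W = - S.g (S.R X Y W) Z := by
  have h1 := congrArg (S.d X) (S.nabla_metric Y Z W)
  rw [S.d_add, S.nabla_metric X (S.nabla Y Z) W,
    S.nabla_metric X Z (S.nabla Y W)] at h1
  have h2 := congrArg (S.d Y) (S.nabla_metric X Z W)
  rw [S.d_add, S.nabla_metric Y (S.nabla X Z) W,
    S.nabla_metric Y Z (S.nabla X W)] at h2
  have h3 := S.nabla_metric (S.bracket X Y) Z W
  have hb := S.bracket_apply X Y (S.g Z W)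
  have expand : S.g (S.R X Y Z) W + S.g (S.R X Y W) Z = 0 := by
    unfold R
    rw [map_sub, map_sub, LinearMap.sub_apply, LinearMap.sub_apply,
      map_sub, map_sub, LinearMap.sub_apply, LinearMap.sub_apply]
    rw [S.g_symm (S.nabla X (S.nabla Y W)) Z,
      S.g_symm (S.nabla Y (S.nabla X W)) Z,
      S.g_symm (S.nabla (S.bracket X Y) W) Z]
    linear_combination -h1 + h2 + h3 - hb
  linear_combination expand

lemma R_skew_self (X Y Z : V) : S.g (S.R X Y Z) Z = 0 := by
  have h := R_skew S X Y Z Z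
  have h2 : S.g (S.R X Y Z) Z + S.g (S.R X Y Z) Z = 0 := by
    linear_combination h
  exact half_cancel h2

lemma R_addZ (X Y Z W : V) :
    S.R X Y (Z + W) = S.R X Y Z + S.R X Y W := by
  unfold R
  simp only [S.nabla_addY]
  rw [bracket_eq]
  abel

lemma R_smulZ (X Y : V) (c : C) (Z : V) :
    S.R X Y (c • Z) = c • S.R X Y Z := by
  unfold R
  simp only [S.nabla_leibniz, S.nabla_addY]
  rw [S.bracket_apply X Y c]
  module

/-- `Z ↦ R X Y Z` as a `C`-linear map. -/
def Rlin (X Y : V) : V →ₗ[C] V where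
  toFun Z := S.R X Y Z
  map_add' Z W := R_addZ S X Y Z W
  map_smul' c Z := R_smulZ S X Y c Z

lemma Ric_eq (X Y : V) :
    S.Ric X Y = ∑ i, S.sgn i • S.g (S.Rlin (S.e i) X Y) (S.e i) := rfl

/-- `Y ↦ Ric X Y` as a `C`-linear map. -/
def RicLin (X : V) : V →ₗ[C] C where
  toFun Y := S.Ric X Y
  map_add' Y Z := by
    simp only [Ric_eq, map_add, LinearMap.add_apply, smul_add,
      Finset.sum_add_distrib]
  map_smul' c Y := by
    simp only [Ric_eq, map_smul, LinearMap.smul_apply, smul_eq_mul,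
      RingHom.id_apply, Finset.mul_sum]
    refine Finset.sum_congr rfl fun i _ => ?_
    rw [mul_smul_comm]

lemma Ric_smulY (X : V) (c : C) (Y : V) :
    S.Ric X (c • Y) = c * S.Ric X Y := by
  have h := (S.RicLin X).map_smul c Y
  exact h

lemma gQ (X Y : V) : S.g (S.Q X) Y = S.Ric X Y := by
  have lhs : S.g (S.Q X) Y = ∑ i, (S.sgn i • S.Ric X (S.e i)) * S.g (S.e i) Y := by
    unfold Q
    rw [map_sum, LinearMap.sum_apply]
    refine Finset.sum_congr rfl fun i _ => ?_
    rw [map_smul, LinearMap.smul_apply, smul_eq_mul]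
  have rhs : S.Ric X Y = ∑ i, (S.sgn i • S.g Y (S.e i)) * S.Ric X (S.e i) := by
    conv_lhs => rw [show S.Ric X Y = S.RicLin X Y from rfl, S.e_complete Y]
    rw [map_sum]
    refine Finset.sum_congr rfl fun i _ => ?_
    rw [map_smul, smul_eq_mul]
    rfl
  rw [lhs, rhs]
  refine Finset.sum_congr rfl fun i _ => ?_
  rw [smul_mul_assoc, smul_mul_assoc, S.g_symm Y (S.e i), mul_comm]

end ContactSetup
end
noncomputable section
namespace ContactSetup

variable {C : Type} [CommRing C] [Algebra ℝ C]
  {V : Type} [AddCommGroup V] [Module ℝ V] [Module C V] [IsScalarTower ℝ C V]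
  {n : ℕ} (S : ContactSetup C V n)

lemma rsmul_cancel {M : Type} [AddCommGroup M] [Module ℝ M] {t : ℝ} {v : M}
    (ht : t ≠ 0) (h : t • v = 0) : v = 0 := by
  have := congrArg (fun w : M => t⁻¹ • w) h
  simpa [smul_smul, inv_mul_cancel₀ ht] using this

/-- The key algebraic lemma: an identity of the form
`α φ² - β h + u φ + ε u φ h = 0` forces `β φ = 0`. -/
lemma Pkey (ek : ℝ) (hek : ek ≠ 1)
    (hh2 : ∀ Z, S.hTen (S.hTen Z) = (ek - 1) • S.φ (S.φ Z))
    (α β : ℝ) (u : C)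
    (hP : ∀ Z, α • S.φ (S.φ Z) - β • S.hTen Z + u • S.φ Z
      + S.ε • (u • S.φ (S.hTen Z)) = 0) :
    ∀ Z, β • S.φ Z = 0 := by
  have hek' : ek - 1 ≠ 0 := sub_ne_zero.mpr hek
  -- D1 : β • φ h Z + ε • (u • h Z) = 0
  have D1 : ∀ Z, β • S.φ (S.hTen Z) + S.ε • (u • S.hTen Z) = 0 := by
    intro Z
    have hA := hP (S.φ Z)
    rw [phi3, phi_h_phi, h_phi_anticomm] at hA
    -- hA : α • (-φZ) - β • (-φ h Z) + u • φ(φZ) + ε•(u• h Z) = 0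
    have hB := congrArg S.φ (hP Z)
    rw [map_zero, map_add, map_add, map_sub, LinearMap.map_smul_of_tower,
      LinearMap.map_smul_of_tower, map_smul, LinearMap.map_smul_of_tower,
      map_smul, phi3, phi_sq_h] at hB
    -- hB : α • (-φZ) - β • φ h Z + u • φ(φZ) + ε•(u• (-h Z)) = 0
    apply half_cancel
    have comb : (β • S.φ (S.hTen Z) + S.ε • (u • S.hTen Z))
        + (β • S.φ (S.hTen Z) + S.ε • (u • S.hTen Z))
        = (α • -S.φ Z - β • -S.φ (S.hTen Z) + u • S.φ (S.φ Z)
            + S.ε • (u • S.hTen Z))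
          - (α • -S.φ Z - β • S.φ (S.hTen Z) + u • S.φ (S.φ Z)
            + S.ε • (u • -S.hTen Z)) := by
      module
    rw [comb, hA, hB, sub_zero]
  -- D3 : β • φ Z + ε • (u • φ(φZ)) = 0
  have D3 : ∀ Z, β • S.φ Z + S.ε • (u • S.φ (S.φ Z)) = 0 := by
    intro Z
    have h1 := congrArg S.hTen (D1 Z)
    rw [h_zero, h_add, h_rsmul, h_rsmul, h_smul] at h1
    -- h1 : β • h φ h Z + ε • (u • h h Z) = 0
    have e1 : S.hTen (S.φ (S.hTen Z)) = (ek - 1) • S.φ Z := by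
      rw [h_phi_anticomm, hh2, LinearMap.map_smul_of_tower, phi3, smul_neg,
        neg_neg]
    rw [e1, hh2] at h1
    -- h1 : β • ((ek-1) • φZ) + ε • (u • ((ek-1) • φ(φZ))) = 0
    apply rsmul_cancel hek'
    have goal' : (ek - 1) • (β • S.φ Z + S.ε • (u • S.φ (S.φ Z)))
        = β • (ek - 1) • S.φ Z + S.ε • (u • (ek - 1) • S.φ (S.φ Z)) := by
      module
    rw [goal', h1]
  -- D4 : -β • φ Z + ε • (u • φ(φZ)) = 0
  have D4 : ∀ Z, - (β • S.φ Z) + S.ε • (u • S.φ (S.φ Z)) = 0 := by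
    intro Z
    have h1 := D1 (S.hTen Z)
    rw [hh2] at h1
    -- h1 : β • φ((ek-1)•φφZ) + ε•(u•((ek-1)•φφZ)) = 0
    rw [LinearMap.map_smul_of_tower, phi3] at h1
    apply rsmul_cancel hek'
    have goal' : (ek - 1) • (-(β • S.φ Z) + S.ε • (u • S.φ (S.φ Z)))
        = β • ((ek - 1) • -S.φ Z) + S.ε • (u • (ek - 1) • S.φ (S.φ Z)) := by
      module
    rw [goal', h1]
  intro Z
  apply half_cancel
  have comb : β • S.φ Z + β • S.φ Z
      = (β • S.φ Z + S.ε • (u • S.φ (S.φ Z)))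
        - (-(β • S.φ Z) + S.ε • (u • S.φ (S.φ Z))) := by abel
  rw [comb, D3, D4, sub_zero]

end ContactSetup
end
set_option maxHeartbeats 2000000 in
/-- on a `(κ,μ)`-contact pseudo-metric manifold with
`εκ < 1` admitting a gradient Ricci soliton (`Hess f + Ric + λg = 0`),
one has `R(X,Y)ξ = 0` for all vector fields `X, Y`. -/
theorem stmt14
    {C : Type} [CommRing C] [Algebra ℝ C]
    {V : Type} [AddCommGroup V] [Module ℝ V] [Module C V] [IsScalarTower ℝ C V]
    {n : ℕ} (S : ContactSetup C V n)
    (κ mu : ℝ)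
    (hKM : ∀ X Y, S.R X Y S.ξ = (S.ε * κ) • (S.η Y • X - S.η X • Y)
        + (S.ε * mu) • (S.η Y • S.hTen X - S.η X • S.hTen Y))
    (hεκ : S.ε * κ < 1)
    (hh2 : ∀ X, S.hTen (S.hTen X) = (S.ε * κ - 1) • S.φ (S.φ X))
    (hQξ : S.Q S.ξ = (2 * (n : ℝ) * κ) • S.ξ)
    (hNablaH : ∀ X, S.nabla S.ξ (S.hTen X) - S.hTen (S.nabla S.ξ X)
        = -((S.ε * mu) • S.φ (S.hTen X)))
    (hQ : ∀ X, S.Q X = (S.ε * (2 * ((n : ℝ) - 1) - n * mu)) • X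
        + (2 * ((n : ℝ) - 1) + mu) • S.hTen X
        + (2 * (1 - (n : ℝ)) * S.ε + 2 * n * κ + n * S.ε * mu) • (S.η X • S.ξ))
    (hr : S.scal = algebraMap ℝ C (2 * (n : ℝ) * (κ - 2 * S.ε)
        + 2 * (n : ℝ) ^ 2 * S.ε * (2 - mu)))
    (lam : ℝ)
    (f : C) (Df : V) (hGrad : ∀ X, S.g Df X = S.d X f)
    (hSol : ∀ X Y, S.g (S.nabla X Df) Y + S.Ric X Y + lam • S.g X Y = 0)
    (X Y : V) :
    S.R X Y S.ξ = 0 := by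
  classical
  by_cases hdeg : ∀ Z : V, S.φ (S.φ Z) = 0
  · -- degenerate case : every vector is proportional to ξ
    have hZet : ∀ Z : V, Z = S.η Z • S.ξ := by
      intro Z
      have h1 := S.φ_sq Z
      rw [hdeg Z] at h1
      exact neg_add_eq_zero.mp h1.symm
    have hh0 : ∀ Z : V, S.hTen Z = 0 := by
      intro Z
      conv_lhs => rw [hZet Z]
      rw [S.h_smul, S.h_xi, smul_zero]
    have e1 : ∀ Z W : V, S.η W • Z - S.η Z • W = 0 := by
      intro Z W
      calc S.η W • Z - S.η Z • W
          = S.η W • (S.η Z • S.ξ) - S.η Z • (S.η W • S.ξ) := by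
            rw [← hZet Z, ← hZet W]
        _ = 0 := by rw [smul_smul, smul_smul, mul_comm, sub_self]
    rw [hKM X Y, hh0 X, hh0 Y, e1 X Y]
    simp
  · -- main case
    push_neg at hdeg
    obtain ⟨X₀, hX₀⟩ := hdeg
    set aa := S.ε * (2 * ((n : ℝ) - 1) - n * mu) with haa
    set bb := 2 * ((n : ℝ) - 1) + mu with hbb
    set cc := 2 * (1 - (n : ℝ)) * S.ε + 2 * n * κ + n * S.ε * mu with hcc
    have heps := S.eps_sq
    have hac : aa + cc = 2 * (n:ℝ) * κ := by rw [haa, hcc]; ring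
    have tzero : ∀ t : ℝ, (∀ Z : V, t • S.φ Z = 0) → t = 0 := by
      intro t ht
      by_contra h
      exact hX₀ (ContactSetup.rsmul_cancel h (ht (S.φ X₀)))
    -- the soliton equation in operator form
    have SV : ∀ Z : V, S.nabla Z Df = -S.Q Z - lam • Z := by
      intro Z
      have hsub : ∀ W, S.g (S.nabla Z Df - (-S.Q Z - lam • Z)) W = 0 := by
        intro W
        have expand : S.g (S.nabla Z Df - (-S.Q Z - lam • Z)) W
            = S.g (S.nabla Z Df) W + S.g (S.Q Z) W + lam • S.g Z W := by
          rw [map_sub, LinearMap.sub_apply, map_sub, LinearMap.sub_apply,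
            map_neg, LinearMap.neg_apply, ← algebraMap_smul C lam Z,
            map_smul, LinearMap.smul_apply, algebraMap_smul]
          module
        rw [expand, S.gQ Z W]
        have hs := hSol Z W
        simp only [Algebra.smul_def] at hs ⊢
        linear_combination hs
      exact sub_eq_zero.mp (S.g_nondeg _ hsub)
    -- Q is additive etc.
    have Qadd : ∀ Z W : V, S.Q (Z + W) = S.Q Z + S.Q W := by
      intro Z W
      rw [hQ, hQ, hQ, S.h_add, map_add]
      module
    have Qneg : ∀ Z : V, S.Q (-Z) = -S.Q Z := by
      intro Z
      rw [hQ, hQ, S.h_neg, map_neg]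
      module
    have Qsub : ∀ Z W : V, S.Q (Z - W) = S.Q Z - S.Q W := by
      intro Z W
      rw [sub_eq_add_neg, Qadd, Qneg, sub_eq_add_neg]
    have Qrsmul : ∀ (r : ℝ) (Z : V), S.Q (r • Z) = r • S.Q Z := by
      intro r Z
      rw [hQ, hQ, ← algebraMap_smul C r Z, S.h_smul, map_smul, smul_eq_mul]
      module
    -- curvature of the soliton
    have CURV : ∀ Z W : V, S.R Z W Df
        = (S.nabla W (S.Q Z) - S.Q (S.nabla W Z))
          - (S.nabla Z (S.Q W) - S.Q (S.nabla Z W)) := by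
      intro Z W
      show S.nabla Z (S.nabla W Df) - S.nabla W (S.nabla Z Df)
          - S.nabla (S.bracket Z W) Df = _
      rw [SV W, SV Z, SV (S.bracket Z W), S.bracket_eq Z W]
      rw [S.nabla_subY, S.nabla_subY, S.nabla_negY, S.nabla_negY,
        S.nabla_rsmulY, S.nabla_rsmulY, Qsub]
      module
    -- g(Q Z, ξ)
    have gQxi : ∀ Z : V, S.g (S.Q Z) S.ξ = ((2*(n:ℝ)*κ) * S.ε) • S.η Z := by
      intro Z
      rw [hQ Z]
      rw [map_add, map_add, LinearMap.add_apply, LinearMap.add_apply,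
        ← algebraMap_smul C aa Z, ← algebraMap_smul C bb (S.hTen Z),
        ← algebraMap_smul C cc (S.η Z • S.ξ),
        map_smul, map_smul, map_smul, LinearMap.smul_apply,
        LinearMap.smul_apply, LinearMap.smul_apply,
        map_smul, LinearMap.smul_apply]
      rw [S.g_xi', S.g_h_xi, S.g_xi_xi]
      simp only [smul_eq_mul, Algebra.smul_def, map_mul]
      have h2 : (algebraMap ℝ C aa + algebraMap ℝ C cc)
          = algebraMap ℝ C (2*(n:ℝ)*κ) := by
        rw [← map_add, hac]
      simp only [map_mul] at h2
      linear_combination (S.η Z * algebraMap ℝ C S.ε) * h2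
    -- (∇_ξ Q) Y
    have hH : ∀ Z : V, S.nabla S.ξ (S.hTen Z)
        = S.hTen (S.nabla S.ξ Z) - (S.ε * mu) • S.φ (S.hTen Z) := by
      intro Z
      have h' := hNablaH Z
      have := sub_eq_iff_eq_add.mp h'
      rw [this]
      abel
    have B5 : ∀ Z : V, S.nabla S.ξ (S.Q Z) - S.Q (S.nabla S.ξ Z)
        = -((bb * (S.ε * mu)) • S.φ (S.hTen Z)) := by
      intro Z
      rw [hQ Z, hQ (S.nabla S.ξ Z)]
      rw [S.nabla_addY, S.nabla_addY, S.nabla_rsmulY, S.nabla_rsmulY,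
        S.nabla_rsmulY, S.nabla_leibniz, S.nabla_xi_xi, smul_zero, add_zero,
        S.d_eta_xi, hH]
      module
    have hec : algebraMap ℝ C S.ε * algebraMap ℝ C S.ε = 1 := by
      rw [← map_mul, heps, map_one]
    -- the fundamental scalar identity (III)
    have B6 : ∀ Z : V, (S.ε*κ) • S.d Z f + (S.ε*mu) • S.g (S.hTen Z) Df
        = (S.ε*κ) • (S.η Z * S.d S.ξ f) := by
      intro Z
      have hC := CURV Z S.ξ
      have hz : S.g (S.R Z S.ξ Df) S.ξ = 0 := by
        rw [hC, B5 Z, hQξ, S.nabla_rsmulY]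
        simp only [map_sub, map_neg, LinearMap.map_smul_of_tower, map_smul,
          LinearMap.sub_apply, LinearMap.neg_apply, LinearMap.smul_apply]
        rw [S.g_phi_xi, S.g_nabla_xi_xi, gQxi, S.eta_nabla_xi]
        simp
      have hskew := S.R_skew Z S.ξ Df S.ξ
      rw [hz] at hskew
      have hval : S.g (S.R Z S.ξ S.ξ) Df = 0 := neg_eq_zero.mp hskew.symm
      rw [hKM Z S.ξ, S.η_ξ, S.h_xi] at hval
      simp only [one_smul, smul_zero, sub_zero, map_add, map_sub,
        LinearMap.map_smul_of_tower, map_smul, LinearMap.add_apply,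
        LinearMap.sub_apply, LinearMap.smul_apply] at hval
      have hgZ : S.g Z Df = S.d Z f := by rw [S.g_symm]; exact hGrad Z
      have hgξ : S.g S.ξ Df = S.d S.ξ f := by rw [S.g_symm]; exact hGrad S.ξ
      rw [hgZ, hgξ] at hval
      simp only [smul_eq_mul] at hval ⊢
      simp only [Algebra.smul_def] at hval ⊢
      linear_combination hval
    -- ∇_ξ Df
    have B7 : S.nabla S.ξ Df = -((2*(n:ℝ)*κ+lam) • S.ξ) := by
      rw [SV S.ξ, hQξ]
      module
    -- second derivatives along ξ
    have hdd : ∀ Z : V, S.d S.ξ (S.d Z f)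
        = -((2*(n:ℝ)*κ+lam) • (S.ε • S.η Z)) + S.d (S.nabla S.ξ Z) f := by
      intro Z
      have hm := S.nabla_metric S.ξ Df Z
      rw [hGrad Z, hGrad (S.nabla S.ξ Z), B7, map_neg, LinearMap.neg_apply,
        LinearMap.map_smul_of_tower, LinearMap.smul_apply, S.g_xi] at hm
      exact hm
    have hdh : ∀ Z : V, S.d S.ξ (S.g (S.hTen Z) Df)
        = S.g (S.hTen (S.nabla S.ξ Z)) Df
          - (S.ε*mu) • S.g (S.φ (S.hTen Z)) Df := by
      intro Z
      have hm := S.nabla_metric S.ξ (S.hTen Z) Df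
      rw [hH Z, B7] at hm
      rw [map_sub, LinearMap.sub_apply, ← algebraMap_smul C (S.ε*mu),
        map_smul, LinearMap.smul_apply, algebraMap_smul] at hm
      rw [map_neg, LinearMap.map_smul_of_tower, S.g_h_xi, smul_zero,
        neg_zero, add_zero] at hm
      exact hm
    have hde : ∀ Z : V, S.d S.ξ (S.η Z * S.d S.ξ f)
        = S.η (S.nabla S.ξ Z) * S.d S.ξ f + S.η Z * S.d S.ξ (S.d S.ξ f) := by
      intro Z
      rw [S.d_mul, S.d_eta_xi]
    -- the differentiated identity
    have V'' : ∀ Z : V, ((S.ε*mu)*(S.ε*mu)) • S.g (S.φ (S.hTen Z)) Df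
        = -(((S.ε*κ)*((2*(n:ℝ)*κ+lam)*S.ε)) • S.η Z)
          - (S.ε*κ) • (S.η Z * S.d S.ξ (S.d S.ξ f)) := by
      intro Z
      have hD := congrArg (S.d S.ξ) (B6 Z)
      rw [S.d_add, S.d_rsmul, S.d_rsmul, S.d_rsmul, hdd, hdh, hde] at hD
      have hB6' := B6 (S.nabla S.ξ Z)
      simp only [Algebra.smul_def] at hD hB6' ⊢
      simp only [map_mul, map_add] at hD hB6' ⊢
      linear_combination hB6' - hD
    have hdxx : (S.ε*κ) • S.d S.ξ (S.d S.ξ f)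
        = -(((S.ε*κ)*((2*(n:ℝ)*κ+lam)*S.ε)) • (1:C)) := by
      have h0 := V'' S.ξ
      rw [S.h_xi, map_zero, map_zero, LinearMap.zero_apply, smul_zero,
        S.η_ξ, one_mul] at h0
      simp only [Algebra.smul_def, map_mul, map_add, mul_one] at h0 ⊢
      linear_combination h0
    have key0 : ∀ Z : V, ((S.ε*mu)*(S.ε*mu)) • S.g (S.φ (S.hTen Z)) Df = 0 := by
      intro Z
      have h0 := V'' Z
      have h1 := hdxx
      simp only [Algebra.smul_def, map_mul, map_add, mul_one] at h0 h1 ⊢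
      linear_combination h0 - S.η Z * h1
    have key1 : ∀ Z : V, ((S.ε*mu)*(S.ε*mu)) • S.g (S.hTen Z) Df = 0 := by
      intro Z
      have h0 := key0 (S.φ Z)
      rw [S.phi_h_phi] at h0
      exact h0
    have B8 : ∀ Z : V, mu • S.g (S.hTen Z) Df = 0 := by
      intro Z
      rcases eq_or_ne mu 0 with h|h
      · rw [h, zero_smul]
      · have hne : (S.ε*mu)*(S.ε*mu) ≠ 0 :=
          mul_ne_zero (mul_ne_zero S.eps_ne h) (mul_ne_zero S.eps_ne h)
        rw [ContactSetup.rsmul_cancel hne (key1 Z), smul_zero]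
    -- the gradient is collinear with ξ (after multiplication by κ)
    have VIII : κ • Df = (S.ε*κ) • (S.d S.ξ f • S.ξ) := by
      have hsub : ∀ W, S.g (κ • Df - (S.ε*κ) • (S.d S.ξ f • S.ξ)) W = 0 := by
        intro W
        rw [map_sub, LinearMap.sub_apply, ← algebraMap_smul C κ Df,
          ← algebraMap_smul C (S.ε*κ), map_smul, map_smul,
          LinearMap.smul_apply, LinearMap.smul_apply, map_smul,
          LinearMap.smul_apply, S.g_xi, hGrad W]
        have h6 := B6 W
        have h8 := B8 W
        simp only [smul_eq_mul] at h6 h8 ⊢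
        simp only [Algebra.smul_def] at h6 h8 ⊢
        simp only [map_mul] at h6 h8 ⊢
        linear_combination (algebraMap ℝ C S.ε) * h6
          - (algebraMap ℝ C κ * S.d W f) * hec
          - (algebraMap ℝ C S.ε * algebraMap ℝ C S.ε) * h8
      exact sub_eq_zero.mp (S.g_nondeg _ hsub)
    -- E4' machinery : if bb = 0 then cc = 0
    have Ecc : bb = 0 → cc = 0 := by
      intro hbb0
      have hQ' : ∀ Z : V, S.Q Z = aa • Z + cc • (S.η Z • S.ξ) := by
        intro Z
        rw [hQ Z, hbb0, zero_smul, add_zero]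
      have nq : ∀ Z W : V, S.nabla Z (S.Q W) - S.Q (S.nabla Z W)
          = cc • ((S.ε • S.g (S.nabla Z S.ξ) W) • S.ξ)
            + cc • (S.η W • S.nabla Z S.ξ) := by
        intro Z W
        rw [hQ' W, hQ' (S.nabla Z W), S.nabla_addY, S.nabla_rsmulY,
          S.nabla_rsmulY, S.nabla_leibniz, S.d_eta]
        module
      have key : ∀ Z W : V, S.g (S.R Z W Df) S.ξ
          = cc • S.g (S.nabla W S.ξ) Z - cc • S.g (S.nabla Z S.ξ) W := by
        intro Z W
        rw [CURV Z W, nq W Z, nq Z W]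
        simp only [map_add, map_sub, LinearMap.map_smul_of_tower, map_smul,
          LinearMap.add_apply, LinearMap.sub_apply, LinearMap.smul_apply,
          smul_eq_mul]
        rw [S.g_xi_xi, S.g_nabla_xi_xi, S.g_nabla_xi_xi]
        simp only [mul_zero, smul_zero, add_zero]
        simp only [Algebra.smul_def, map_mul, map_add, map_ofNat, map_natCast]
          at *
        linear_combination (algebraMap ℝ C cc * S.g (S.nabla W S.ξ) Z
          - algebraMap ℝ C cc * S.g (S.nabla Z S.ξ) W) * hec
      have hL : ∀ Z W : V, S.g (S.R Z W Df) S.ξ = 0 := by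
        intro Z W
        rw [S.R_skew, neg_eq_zero]
        rw [hKM Z W]
        have hgZ : S.g Z Df = S.d Z f := by rw [S.g_symm]; exact hGrad Z
        have hgW : S.g W Df = S.d W f := by rw [S.g_symm]; exact hGrad W
        simp only [map_add, map_sub, LinearMap.map_smul_of_tower, map_smul,
          LinearMap.add_apply, LinearMap.sub_apply, LinearMap.smul_apply,
          smul_eq_mul]
        rw [hgZ, hgW]
        have h6Z := B6 Z
        have h6W := B6 W
        simp only [Algebra.smul_def, map_mul, map_add, map_ofNat, map_natCast]
          at h6Z h6W ⊢
        linear_combination S.η W * h6Z - S.η Z * h6W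
      have key2 : ∀ Z W : V, cc • S.g (S.nabla W S.ξ) Z
          = cc • S.g (S.nabla Z S.ξ) W := by
        intro Z W
        have h0 := key Z W
        rw [hL Z W] at h0
        exact sub_eq_zero.mp h0.symm
      have key3 : ∀ Z : V, (4*cc*S.ε) • S.φ Z = 0 := by
        intro Z
        apply S.g_nondeg
        intro W
        rw [← algebraMap_smul C (4*cc*S.ε), map_smul, LinearMap.smul_apply]
        have inst1 := key2 Z W
        have inst2 := key2 (S.φ Z) (S.φ W)
        rw [S.nabla_xi', S.nabla_xi'] at inst1
        rw [S.nabla_xi', S.nabla_xi'] at inst2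
        simp only [map_add, map_sub, map_neg, LinearMap.map_smul_of_tower,
          map_smul, LinearMap.add_apply, LinearMap.sub_apply,
          LinearMap.neg_apply, LinearMap.smul_apply, smul_eq_mul] at inst1 inst2
        rw [S.phi_h_phi, S.phi_h_phi] at inst2
        -- rewrite the φφ-pairings
        have c1 : S.g (S.φ (S.φ W)) (S.φ Z) = S.g Z (S.φ W) := by
          rw [S.g_symm, S.g_compat, S.eta_phi, mul_zero, smul_zero, sub_zero]
        have c2 : S.g (S.φ (S.φ Z)) (S.φ W) = S.g W (S.φ Z) := by
          rw [S.g_symm, S.g_compat, S.eta_phi, mul_zero, smul_zero, sub_zero]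
        rw [c1, c2] at inst2
        -- normalize atoms : everything in terms of g W (φZ), g Z (φW), g(hW)(φZ), g(hZ)(φW)
        have a1 : S.g (S.φ W) Z = - S.g W (S.φ Z) := by
          rw [S.g_symm]; exact S.phi_anti Z W
        have a2 : S.g (S.φ (S.hTen W)) Z = - S.g (S.hTen W) (S.φ Z) := by
          rw [S.g_symm]; exact S.phi_anti Z (S.hTen W)
        have a3 : S.g (S.φ Z) W = S.g W (S.φ Z) := S.g_symm _ _
        have a4 : S.g (S.φ (S.hTen Z)) W = - S.g (S.hTen Z) (S.φ W) := by
          rw [S.g_symm]; exact S.phi_anti W (S.hTen Z)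
        have a5 : S.g Z (S.φ W) = - S.g W (S.φ Z) := S.phi_anti Z W
        have a6 : S.g (S.hTen W) (S.φ Z) = S.g (S.hTen W) (S.φ Z) := rfl
        rw [a1, a2, a3, a4] at inst1
        rw [a5] at inst2
        have a7 : S.g (S.φ Z) W = S.g W (S.φ Z) := S.g_symm _ _
        rw [a7]
        simp only [smul_eq_mul, Algebra.smul_def, map_mul, map_add, map_ofNat,
          map_natCast, mul_neg, neg_neg] at inst1 inst2 ⊢
        linear_combination inst1 + inst2
      have h4 := tzero _ key3
      have h4' : (4:ℝ) * cc = 0 := by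
        rcases mul_eq_zero.mp h4 with h|h
        · exact h
        · exact absurd h S.eps_ne
      linarith
    have hone : S.ε * κ ≠ 1 := ne_of_lt hεκ
    have hcc3 : cc = 2*(n:ℝ)*κ - aa := by linarith
    -- ================= κ = 0 =================
    have hk0 : κ = 0 := by
      by_contra hκ
      have hIX : ∀ Z : V, κ • (-S.Q Z - lam • Z)
          = (S.ε*κ) • (S.d Z (S.d S.ξ f) • S.ξ)
            + (S.ε*κ) • (S.d S.ξ f • S.nabla Z S.ξ) := by
        intro Z
        calc κ • (-S.Q Z - lam • Z) = κ • S.nabla Z Df := by rw [SV Z]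
          _ = S.nabla Z (κ • Df) := (S.nabla_rsmulY Z κ Df).symm
          _ = S.nabla Z ((S.ε*κ) • (S.d S.ξ f • S.ξ)) := by rw [VIII]
          _ = (S.ε*κ) • (S.d Z (S.d S.ξ f) • S.ξ
                + S.d S.ξ f • S.nabla Z S.ξ) := by
              rw [S.nabla_rsmulY, S.nabla_leibniz]
          _ = _ := smul_add _ _ _
      have hXVI : ∀ Z : V, algebraMap ℝ C κ * S.d Z (S.d S.ξ f)
          = -(algebraMap ℝ C ((2*(n:ℝ)*κ*κ + κ*lam)*S.ε) * S.η Z) := by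
        intro Z
        have h0 := congrArg (fun v => S.g v S.ξ) (hIX Z)
        simp only [map_add, map_sub, map_neg, LinearMap.map_smul_of_tower,
          map_smul, LinearMap.add_apply, LinearMap.sub_apply,
          LinearMap.neg_apply, LinearMap.smul_apply, smul_eq_mul] at h0
        rw [gQxi, S.g_xi', S.g_xi_xi, S.g_nabla_xi_xi, mul_zero, smul_zero,
          add_zero] at h0
        simp only [Algebra.smul_def, map_mul, map_add, map_ofNat,
          map_natCast] at h0 ⊢
        linear_combination -h0 - (algebraMap ℝ C κ * S.d Z (S.d S.ξ f)) * hec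
      have e4 : ∀ Z : V, (S.ε*κ) • (S.d Z (S.d S.ξ f) • S.ξ)
          = -((κ*(2*(n:ℝ)*κ+lam)) • (S.η Z • S.ξ)) := by
        intro Z
        have e3 : (S.ε*κ) • (S.d Z (S.d S.ξ f) • S.ξ)
            = S.ε • ((algebraMap ℝ C κ * S.d Z (S.d S.ξ f)) • S.ξ) := by
          module
        rw [e3, hXVI Z]
        have hr2 : S.ε*((2*(n:ℝ)*κ*κ + κ*lam)*S.ε) = κ*(2*(n:ℝ)*κ+lam) := by
          linear_combination (2*(n:ℝ)*κ*κ + κ*lam) * heps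
        calc S.ε • (-(algebraMap ℝ C ((2*(n:ℝ)*κ*κ + κ*lam)*S.ε) * S.η Z) • S.ξ)
            = (S.ε*((2*(n:ℝ)*κ*κ + κ*lam)*S.ε)) • -(S.η Z • S.ξ) := by module
          _ = -((κ*(2*(n:ℝ)*κ+lam)) • (S.η Z • S.ξ)) := by rw [hr2]; module
      have hr1 : S.ε*κ*S.ε = κ := by linear_combination κ * heps
      have e5 : ∀ Z : V,
          (S.ε*κ) • (S.d S.ξ f • (-(S.ε • S.φ Z) - S.φ (S.hTen Z)))
          = -(κ • (S.d S.ξ f • S.φ Z))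
            - (S.ε*κ) • (S.d S.ξ f • S.φ (S.hTen Z)) := by
        intro Z
        calc (S.ε*κ) • (S.d S.ξ f • (-(S.ε • S.φ Z) - S.φ (S.hTen Z)))
            = (S.ε*κ*S.ε) • -(S.d S.ξ f • S.φ Z)
              - (S.ε*κ) • (S.d S.ξ f • S.φ (S.hTen Z)) := by module
          _ = _ := by rw [hr1]; module
      have PX : ∀ Z : V, (κ*(aa+lam)) • S.φ (S.φ Z) - (κ*bb) • S.hTen Z
          + (algebraMap ℝ C κ * S.d S.ξ f) • S.φ Z
          + S.ε • ((algebraMap ℝ C κ * S.d S.ξ f) • S.φ (S.hTen Z)) = 0 := by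
        intro Z
        have h0 := hIX Z
        rw [S.nabla_xi' Z, e5 Z, e4 Z, hQ Z, hcc3] at h0
        rw [S.φ_sq Z]
        linear_combination (norm := module) h0
      have Pk := S.Pkey (S.ε*κ) hone hh2 (κ*(aa+lam)) (κ*bb)
        (algebraMap ℝ C κ * S.d S.ξ f) PX
      have hkb := tzero _ Pk
      have hbb0 : bb = 0 := by
        rcases mul_eq_zero.mp hkb with h|h
        · exact absurd h hκ
        · exact h
      have hcc0 := Ecc hbb0
      have hE : S.ε*κ ≠ 0 := by
        intro h
        rcases mul_eq_zero.mp h with h'|h'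
        · exact S.eps_ne h'
        · exact hκ h'
      have hmu : mu = 2 - 2*(n:ℝ) := by rw [hbb] at hbb0; linarith
      have hkey : (2:ℝ) - 2*(n:ℝ)^2 + 2*(n:ℝ)*(S.ε*κ) = 0 := by
        rw [hcc, hmu] at hcc0
        linear_combination S.ε * hcc0 - (2 - 2*(n:ℝ)^2) * heps
      rcases Nat.lt_or_ge n 2 with h2|h2
      · have : n = 0 ∨ n = 1 := by omega
        rcases this with h0|h0
        · have hN : (n:ℝ) = 0 := by rw [h0]; norm_num
          rw [hN] at hkey; norm_num at hkey
        · have hN : (n:ℝ) = 1 := by rw [h0]; norm_num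
          rw [hN] at hkey
          apply hE
          linarith
      · have hN : (2:ℝ) ≤ (n:ℝ) := by exact_mod_cast h2
        nlinarith [hkey, hN,
          mul_lt_mul_of_pos_left hεκ (by linarith : (0:ℝ) < 2*(n:ℝ))]
    subst hk0
    -- ================= mu = 0 =================
    have hm0 : mu = 0 := by
      by_contra hμ
      have ghDf : ∀ Z : V, S.g (S.hTen Z) Df = 0 := by
        intro Z
        exact ContactSetup.rsmul_cancel hμ (B8 Z)
      have ghφDf : ∀ Z : V, S.g (S.φ (S.hTen Z)) Df = 0 := by
        intro Z
        have h1 := ghDf (S.φ Z)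
        rw [S.h_phi_anticomm, map_neg, LinearMap.neg_apply, neg_eq_zero] at h1
        exact h1
      have hQξ0 : S.Q S.ξ = 0 := by rw [hQξ, mul_zero, zero_smul]
      have hRx : ∀ W : V, S.R S.ξ W Df
          = (S.ε*aa - bb) • S.φ W
            + (aa - S.ε*bb + bb*(S.ε*mu)) • S.φ (S.hTen W) := by
        intro W
        have h0 := CURV S.ξ W
        rw [B5 W, hQξ0, S.nabla_zeroY, S.nabla_xi' W, Qsub, Qneg, Qrsmul,
          hQ (S.φ W), hQ (S.φ (S.hTen W)), S.eta_phi, S.eta_phi,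
          S.h_phi_anticomm (S.hTen W), hh2 W, S.h_phi_anticomm W,
          LinearMap.map_smul_of_tower, S.phi3] at h0
        linear_combination (norm := module) h0
      have hpair : ∀ W : V, (S.ε*aa - bb) • S.g (S.φ W) Df = 0 := by
        intro W
        have h0 := S.R_skew_self S.ξ W Df
        rw [hRx W, map_add, LinearMap.add_apply,
          ← algebraMap_smul C (S.ε*aa - bb),
          ← algebraMap_smul C (aa - S.ε*bb + bb*(S.ε*mu)), map_smul, map_smul,
          LinearMap.smul_apply, LinearMap.smul_apply, ghφDf, smul_zero,
          add_zero, algebraMap_smul] at h0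
        exact h0
      rcases eq_or_ne (S.ε*aa - bb) 0 with hc|hc
      · have hmun : mu * ((n:ℝ)+1) = 0 := by
          rw [haa, hbb] at hc
          linear_combination -hc + (2*((n:ℝ)-1)-(n:ℝ)*mu) * heps
        have hn1 : ((n:ℝ)+1) ≠ 0 := by positivity
        exact hμ ((mul_eq_zero.mp hmun).resolve_right hn1)
      · have hgφ : ∀ W : V, S.g (S.φ W) Df = 0 := by
          intro W
          exact ContactSetup.rsmul_cancel hc (hpair W)
        have hφDf : S.φ Df = 0 := by
          apply S.g_nondeg
          intro W
          rw [S.g_symm (S.φ Df) W, S.phi_anti W Df, S.g_symm Df (S.φ W),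
            hgφ W, neg_zero]
        have hDfξ : Df = (S.ε • S.d S.ξ f) • S.ξ := by
          have h1 := S.φ_sq Df
          rw [hφDf, map_zero] at h1
          have h2 : Df = S.η Df • S.ξ := neg_add_eq_zero.mp h1.symm
          rw [S.η_g, S.g_symm, hGrad] at h2
          exact h2
        have e6 : ∀ Z : V, S.nabla Z Df
            = (S.ε • S.d Z (S.d S.ξ f)) • S.ξ
              + (S.ε • S.d S.ξ f) • S.nabla Z S.ξ := by
          intro Z
          conv_lhs => rw [hDfξ]
          rw [S.nabla_leibniz, S.d_rsmul]
        have hdd2 : ∀ Z : V, S.d Z (S.d S.ξ f) = -((lam*S.ε) • S.η Z) := by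
          intro Z
          have h1 := congrArg (fun v => S.g v S.ξ) ((e6 Z).symm.trans (SV Z))
          simp only [map_add, map_sub, map_neg, LinearMap.map_smul_of_tower,
            map_smul, LinearMap.add_apply, LinearMap.sub_apply,
            LinearMap.neg_apply, LinearMap.smul_apply, smul_eq_mul] at h1
          rw [S.g_xi_xi, S.g_nabla_xi_xi, gQxi, S.g_xi'] at h1
          simp only [mul_zero, smul_zero, add_zero] at h1
          simp only [Algebra.smul_def, map_mul, map_add, map_ofNat,
            map_natCast, map_zero, zero_mul, mul_zero, neg_zero,
            zero_sub, zero_add] at h1 ⊢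
          linear_combination h1 - S.d Z (S.d S.ξ f) * hec
        have e7 : ∀ Z : V, (S.ε • S.d Z (S.d S.ξ f)) • S.ξ
            = -(lam • (S.η Z • S.ξ)) := by
          intro Z
          have hr3 : S.ε*(lam*S.ε) = lam := by linear_combination lam * heps
          rw [hdd2 Z, smul_neg, smul_smul, hr3]
          simp only [Algebra.smul_def]
          module
        have e8 : ∀ Z : V, (S.ε • S.d S.ξ f) • (-(S.ε • S.φ Z) - S.φ (S.hTen Z))
            = -(S.d S.ξ f • S.φ Z) - S.ε • (S.d S.ξ f • S.φ (S.hTen Z)) := by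
          intro Z
          rw [Algebra.smul_def]
          calc (algebraMap ℝ C S.ε * S.d S.ξ f) • (-(S.ε • S.φ Z) - S.φ (S.hTen Z))
              = (S.ε*S.ε) • -(S.d S.ξ f • S.φ Z)
                - S.ε • (S.d S.ξ f • S.φ (S.hTen Z)) := by module
            _ = _ := by rw [heps]; module
        have K1 : ∀ Z : V, (aa+lam) • S.φ (S.φ Z) - bb • S.hTen Z
            + S.d S.ξ f • S.φ Z + S.ε • (S.d S.ξ f • S.φ (S.hTen Z)) = 0 := by
          intro Z
          have h0 := (e6 Z).symm.trans (SV Z)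
          rw [e7 Z, S.nabla_xi' Z, e8 Z, hQ Z, hcc3] at h0
          rw [S.φ_sq Z]
          linear_combination (norm := module) -h0
        have Pk2 := S.Pkey (S.ε*0) hone hh2 (aa+lam) bb (S.d S.ξ f) K1
        have hbb0 : bb = 0 := tzero _ Pk2
        have hcc0 := Ecc hbb0
        have hmu : mu = 2 - 2*(n:ℝ) := by rw [hbb] at hbb0; linarith
        have hkey2 : (2:ℝ) - 2*(n:ℝ)^2 = 0 := by
          rw [hcc, hmu] at hcc0
          linear_combination S.ε * hcc0 - (2 - 2*(n:ℝ)^2) * heps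
        have hfac : ((n:ℝ)-1)*((n:ℝ)+1) = 0 := by linear_combination (-1/2) * hkey2
        have hn1 : ((n:ℝ)+1) ≠ 0 := by positivity
        have hN1 : (n:ℝ) = 1 := by
          have := (mul_eq_zero.mp hfac).resolve_right hn1
          linarith
        rw [hN1] at hmu
        norm_num at hmu
        exact hμ hmu
    -- ================= conclusion =================
    rw [hKM X Y, hm0]
    simp
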